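/- arXiv:2309.15764 — 2 statements merged into one kernel-verified Lean document; each statement's English description precedes it below -/
import Mathlib

section
/- For smooth functions f, g, h on ℝ³ (possibly time-dependent) and a smooth velocity field u = (u₁,u₂,u₃), defining the convective derivative D_t f = ∂_t f + u·∇f and the Nambu bracket {f,g,h} = det(∂(f,g,h)/∂(x,y,z)), the identity D_t {f,g,h} = {D_t f, g, h} + {f, D_t g, h} + {f, g, D_t h} − (∇·u){f,g,h} holds pointwise. -/
noncomputable section

/-- Partial derivatives of a function of `(x, y, z, t)`. -/
def p1 (f : ℝ → ℝ → ℝ → ℝ → ℝ) : ℝ → ℝ → ℝ → ℝ → ℝ :=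
  fun x y z t => deriv (fun x' => f x' y z t) x

def p2 (f : ℝ → ℝ → ℝ → ℝ → ℝ) : ℝ → ℝ → ℝ → ℝ → ℝ :=
  fun x y z t => deriv (fun y' => f x y' z t) y

def p3 (f : ℝ → ℝ → ℝ → ℝ → ℝ) : ℝ → ℝ → ℝ → ℝ → ℝ :=
  fun x y z t => deriv (fun z' => f x y z' t) z

def p4 (f : ℝ → ℝ → ℝ → ℝ → ℝ) : ℝ → ℝ → ℝ → ℝ → ℝ :=
  fun x y z t => deriv (fun t' => f x y z t') t

/-- Convective derivative `D_t f = ∂_t f + u·∇f`. -/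
def Dt3 (u1 u2 u3 f : ℝ → ℝ → ℝ → ℝ → ℝ) : ℝ → ℝ → ℝ → ℝ → ℝ :=
  fun x y z t => p4 f x y z t + u1 x y z t * p1 f x y z t + u2 x y z t * p2 f x y z t
    + u3 x y z t * p3 f x y z t

/-- Nambu bracket `{f,g,h} = det ∂(f,g,h)/∂(x,y,z)`. -/
def nb (f g h : ℝ → ℝ → ℝ → ℝ → ℝ) : ℝ → ℝ → ℝ → ℝ → ℝ :=
  fun x y z t =>
    p1 f x y z t * (p2 g x y z t * p3 h x y z t - p3 g x y z t * p2 h x y z t)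
  - p2 f x y z t * (p1 g x y z t * p3 h x y z t - p3 g x y z t * p1 h x y z t)
  + p3 f x y z t * (p1 g x y z t * p2 h x y z t - p2 g x y z t * p1 h x y z t)

/-! Auxiliary development -/

abbrev E4 := ℝ × ℝ × ℝ × ℝ

def unc (f : ℝ → ℝ → ℝ → ℝ → ℝ) : E4 → ℝ := fun p => f p.1 p.2.1 p.2.2.1 p.2.2.2

def E1 : E4 := (1,0,0,0)
def E2 : E4 := (0,1,0,0)
def E3 : E4 := (0,0,1,0)
def Ee4 : E4 := (0,0,0,1)

def DD (f : ℝ → ℝ → ℝ → ℝ → ℝ) (v : E4) : E4 → ℝ := fun p => fderiv ℝ (unc f) p v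

lemma line1 (G : E4 → ℝ) (x y z t : ℝ) (hG : DifferentiableAt ℝ G (x,y,z,t)) :
    HasDerivAt (fun x' => G (x',y,z,t)) (fderiv ℝ G (x,y,z,t) E1) x := by
  have hL : HasFDerivAt (fun a : ℝ => ((a,y,z,t) : E4))
      ((ContinuousLinearMap.id ℝ ℝ).prod 0) x :=
    (hasFDerivAt_id x).prodMk (hasFDerivAt_const _ _)
  have := (hG.hasFDerivAt.comp x hL).hasDerivAt
  exact this

lemma line2 (G : E4 → ℝ) (x y z t : ℝ) (hG : DifferentiableAt ℝ G (x,y,z,t)) :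
    HasDerivAt (fun y' => G (x,y',z,t)) (fderiv ℝ G (x,y,z,t) E2) y := by
  have hL : HasFDerivAt (fun b : ℝ => ((x,b,z,t) : E4))
      ((0 : ℝ →L[ℝ] ℝ).prod ((ContinuousLinearMap.id ℝ ℝ).prod 0)) y :=
    (hasFDerivAt_const _ _).prodMk ((hasFDerivAt_id y).prodMk (hasFDerivAt_const _ _))
  have := (hG.hasFDerivAt.comp y hL).hasDerivAt
  exact this

lemma line3 (G : E4 → ℝ) (x y z t : ℝ) (hG : DifferentiableAt ℝ G (x,y,z,t)) :
    HasDerivAt (fun z' => G (x,y,z',t)) (fderiv ℝ G (x,y,z,t) E3) z := by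
  have hL : HasFDerivAt (fun c : ℝ => ((x,y,c,t) : E4))
      ((0 : ℝ →L[ℝ] ℝ).prod ((0 : ℝ →L[ℝ] ℝ).prod ((ContinuousLinearMap.id ℝ ℝ).prod 0))) z :=
    (hasFDerivAt_const _ _).prodMk ((hasFDerivAt_const _ _).prodMk
      ((hasFDerivAt_id z).prodMk (hasFDerivAt_const _ _)))
  have := (hG.hasFDerivAt.comp z hL).hasDerivAt
  exact this

lemma line4 (G : E4 → ℝ) (x y z t : ℝ) (hG : DifferentiableAt ℝ G (x,y,z,t)) :
    HasDerivAt (fun t' => G (x,y,z,t')) (fderiv ℝ G (x,y,z,t) Ee4) t := by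
  have hL : HasFDerivAt (fun d : ℝ => ((x,y,z,d) : E4))
      ((0 : ℝ →L[ℝ] ℝ).prod ((0 : ℝ →L[ℝ] ℝ).prod ((0 : ℝ →L[ℝ] ℝ).prod
        (ContinuousLinearMap.id ℝ ℝ)))) t :=
    (hasFDerivAt_const _ _).prodMk ((hasFDerivAt_const _ _).prodMk
      ((hasFDerivAt_const _ _).prodMk (hasFDerivAt_id t)))
  have := (hG.hasFDerivAt.comp t hL).hasDerivAt
  exact this

lemma p1_eq (φ : ℝ → ℝ → ℝ → ℝ → ℝ) {x y z t : ℝ}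
    (h : DifferentiableAt ℝ (unc φ) (x,y,z,t)) :
    p1 φ x y z t = fderiv ℝ (unc φ) (x,y,z,t) E1 := (line1 (unc φ) x y z t h).deriv

lemma p2_eq (φ : ℝ → ℝ → ℝ → ℝ → ℝ) {x y z t : ℝ}
    (h : DifferentiableAt ℝ (unc φ) (x,y,z,t)) :
    p2 φ x y z t = fderiv ℝ (unc φ) (x,y,z,t) E2 := (line2 (unc φ) x y z t h).deriv

lemma p3_eq (φ : ℝ → ℝ → ℝ → ℝ → ℝ) {x y z t : ℝ}
    (h : DifferentiableAt ℝ (unc φ) (x,y,z,t)) :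
    p3 φ x y z t = fderiv ℝ (unc φ) (x,y,z,t) E3 := (line3 (unc φ) x y z t h).deriv

lemma p4_eq (φ : ℝ → ℝ → ℝ → ℝ → ℝ) {x y z t : ℝ}
    (h : DifferentiableAt ℝ (unc φ) (x,y,z,t)) :
    p4 φ x y z t = fderiv ℝ (unc φ) (x,y,z,t) Ee4 := (line4 (unc φ) x y z t h).deriv

lemma DD_contDiff {f : ℝ → ℝ → ℝ → ℝ → ℝ} (hf : ContDiff ℝ (⊤ : ℕ∞) (unc f)) (v : E4) :
    ContDiff ℝ (⊤ : ℕ∞) (DD f v) :=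
  (hf.fderiv_right (by simp)).clm_apply contDiff_const

lemma S_symm (f : ℝ → ℝ → ℝ → ℝ → ℝ) (hf : ContDiff ℝ (⊤ : ℕ∞) (unc f)) (v w q : E4) :
    fderiv ℝ (fun p => fderiv ℝ (unc f) p w) q v
      = fderiv ℝ (fun p => fderiv ℝ (unc f) p v) q w := by
  have hs : IsSymmSndFDerivAt ℝ (unc f) q := hf.contDiffAt.isSymmSndFDerivAt (by simp; exact WithTop.coe_le_coe.mpr le_top)
  rw [fderiv_clm_apply ((hf.fderiv_right (m := (⊤ : ℕ∞)) (by simp)).differentiable (by simp) q)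
        (differentiableAt_const _),
      fderiv_clm_apply ((hf.fderiv_right (m := (⊤ : ℕ∞)) (by simp)).differentiable (by simp) q)
        (differentiableAt_const _)]
  simp [hs w v]

lemma S_symm' (f : ℝ → ℝ → ℝ → ℝ → ℝ) (hf : ContDiff ℝ (⊤ : ℕ∞) (unc f)) (v w q : E4) :
    fderiv ℝ (DD f w) q v = fderiv ℝ (DD f v) q w := S_symm f hf v w q

def NBa (f g h : ℝ → ℝ → ℝ → ℝ → ℝ) : E4 → ℝ := fun p =>
    DD f E1 p * (DD g E2 p * DD h E3 p - DD g E3 p * DD h E2 p)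
  - DD f E2 p * (DD g E1 p * DD h E3 p - DD g E3 p * DD h E1 p)
  + DD f E3 p * (DD g E1 p * DD h E2 p - DD g E2 p * DD h E1 p)

def MFa (u1 u2 u3 f : ℝ → ℝ → ℝ → ℝ → ℝ) : E4 → ℝ := fun p =>
  DD f Ee4 p + unc u1 p * DD f E1 p + unc u2 p * DD f E2 p + unc u3 p * DD f E3 p

lemma unc_nb {f g h : ℝ → ℝ → ℝ → ℝ → ℝ} (hf : ContDiff ℝ (⊤ : ℕ∞) (unc f))
    (hg : ContDiff ℝ (⊤ : ℕ∞) (unc g)) (hh : ContDiff ℝ (⊤ : ℕ∞) (unc h)) :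
    unc (nb f g h) = NBa f g h := by
  funext p
  obtain ⟨x, y, z, t⟩ := p
  show nb f g h x y z t = _
  rw [nb]
  rw [p1_eq f (hf.differentiable (by simp) _), p2_eq f (hf.differentiable (by simp) _),
      p3_eq f (hf.differentiable (by simp) _),
      p1_eq g (hg.differentiable (by simp) _), p2_eq g (hg.differentiable (by simp) _),
      p3_eq g (hg.differentiable (by simp) _),
      p1_eq h (hh.differentiable (by simp) _), p2_eq h (hh.differentiable (by simp) _),
      p3_eq h (hh.differentiable (by simp) _)]
  rfl

lemma unc_Dt3 {u1 u2 u3 f : ℝ → ℝ → ℝ → ℝ → ℝ} (hf : ContDiff ℝ (⊤ : ℕ∞) (unc f)) :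
    unc (Dt3 u1 u2 u3 f) = MFa u1 u2 u3 f := by
  funext p
  obtain ⟨x, y, z, t⟩ := p
  show Dt3 u1 u2 u3 f x y z t = _
  rw [Dt3]
  rw [p1_eq f (hf.differentiable (by simp) _), p2_eq f (hf.differentiable (by simp) _),
      p3_eq f (hf.differentiable (by simp) _), p4_eq f (hf.differentiable (by simp) _)]
  rfl

lemma NBa_contDiff {f g h : ℝ → ℝ → ℝ → ℝ → ℝ} (hf : ContDiff ℝ (⊤ : ℕ∞) (unc f))
    (hg : ContDiff ℝ (⊤ : ℕ∞) (unc g)) (hh : ContDiff ℝ (⊤ : ℕ∞) (unc h)) :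
    ContDiff ℝ (⊤ : ℕ∞) (NBa f g h) := by
  unfold NBa
  exact (((DD_contDiff hf E1).mul (((DD_contDiff hg E2).mul (DD_contDiff hh E3)).sub
      ((DD_contDiff hg E3).mul (DD_contDiff hh E2)))).sub
    ((DD_contDiff hf E2).mul (((DD_contDiff hg E1).mul (DD_contDiff hh E3)).sub
      ((DD_contDiff hg E3).mul (DD_contDiff hh E1))))).add
    ((DD_contDiff hf E3).mul (((DD_contDiff hg E1).mul (DD_contDiff hh E2)).sub
      ((DD_contDiff hg E2).mul (DD_contDiff hh E1))))

lemma MFa_contDiff {u1 u2 u3 f : ℝ → ℝ → ℝ → ℝ → ℝ} (hf : ContDiff ℝ (⊤ : ℕ∞) (unc f))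
    (hu1 : ContDiff ℝ (⊤ : ℕ∞) (unc u1)) (hu2 : ContDiff ℝ (⊤ : ℕ∞) (unc u2))
    (hu3 : ContDiff ℝ (⊤ : ℕ∞) (unc u3)) :
    ContDiff ℝ (⊤ : ℕ∞) (MFa u1 u2 u3 f) := by
  unfold MFa
  exact (((DD_contDiff hf Ee4).add (hu1.mul (DD_contDiff hf E1))).add
    (hu2.mul (DD_contDiff hf E2))).add (hu3.mul (DD_contDiff hf E3))

lemma fderiv_NBa {f g h : ℝ → ℝ → ℝ → ℝ → ℝ} (hf : ContDiff ℝ (⊤ : ℕ∞) (unc f))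
    (hg : ContDiff ℝ (⊤ : ℕ∞) (unc g)) (hh : ContDiff ℝ (⊤ : ℕ∞) (unc h)) (q v : E4) :
    fderiv ℝ (NBa f g h) q v =
      fderiv ℝ (DD f E1) q v * (DD g E2 q * DD h E3 q - DD g E3 q * DD h E2 q)
    + DD f E1 q * (fderiv ℝ (DD g E2) q v * DD h E3 q + DD g E2 q * fderiv ℝ (DD h E3) q v
        - (fderiv ℝ (DD g E3) q v * DD h E2 q + DD g E3 q * fderiv ℝ (DD h E2) q v))
    - (fderiv ℝ (DD f E2) q v * (DD g E1 q * DD h E3 q - DD g E3 q * DD h E1 q)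
      + DD f E2 q * (fderiv ℝ (DD g E1) q v * DD h E3 q + DD g E1 q * fderiv ℝ (DD h E3) q v
        - (fderiv ℝ (DD g E3) q v * DD h E1 q + DD g E3 q * fderiv ℝ (DD h E1) q v)))
    + (fderiv ℝ (DD f E3) q v * (DD g E1 q * DD h E2 q - DD g E2 q * DD h E1 q)
      + DD f E3 q * (fderiv ℝ (DD g E1) q v * DD h E2 q + DD g E1 q * fderiv ℝ (DD h E2) q v
        - (fderiv ℝ (DD g E2) q v * DD h E1 q + DD g E2 q * fderiv ℝ (DD h E1) q v))) := by
  have D : ∀ (φ : ℝ → ℝ → ℝ → ℝ → ℝ), ContDiff ℝ (⊤ : ℕ∞) (unc φ) → ∀ w : E4,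
      HasFDerivAt (DD φ w) (fderiv ℝ (DD φ w) q) q := fun φ hφ w =>
    (((DD_contDiff hφ w).differentiable (by simp)) q).hasFDerivAt
  have H := (((D f hf E1).mul (((D g hg E2).mul (D h hh E3)).sub
      ((D g hg E3).mul (D h hh E2)))).sub
    ((D f hf E2).mul (((D g hg E1).mul (D h hh E3)).sub
      ((D g hg E3).mul (D h hh E1))))).add
    ((D f hf E3).mul (((D g hg E1).mul (D h hh E2)).sub
      ((D g hg E2).mul (D h hh E1))))
  have h2 : fderiv ℝ (NBa f g h) q = _ := H.fderiv
  rw [h2]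
  simp only [ContinuousLinearMap.add_apply, ContinuousLinearMap.sub_apply,
    ContinuousLinearMap.smul_apply, smul_eq_mul, Pi.mul_apply, Pi.sub_apply]
  ring

lemma fderiv_MFa {u1 u2 u3 f : ℝ → ℝ → ℝ → ℝ → ℝ} (hf : ContDiff ℝ (⊤ : ℕ∞) (unc f))
    (hu1 : ContDiff ℝ (⊤ : ℕ∞) (unc u1)) (hu2 : ContDiff ℝ (⊤ : ℕ∞) (unc u2))
    (hu3 : ContDiff ℝ (⊤ : ℕ∞) (unc u3)) (q v : E4) :
    fderiv ℝ (MFa u1 u2 u3 f) q v =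
      fderiv ℝ (DD f Ee4) q v
    + (fderiv ℝ (unc u1) q v * DD f E1 q + unc u1 q * fderiv ℝ (DD f E1) q v)
    + (fderiv ℝ (unc u2) q v * DD f E2 q + unc u2 q * fderiv ℝ (DD f E2) q v)
    + (fderiv ℝ (unc u3) q v * DD f E3 q + unc u3 q * fderiv ℝ (DD f E3) q v) := by
  have D : ∀ w : E4, HasFDerivAt (DD f w) (fderiv ℝ (DD f w) q) q := fun w =>
    (((DD_contDiff hf w).differentiable (by simp)) q).hasFDerivAt
  have U1 : HasFDerivAt (unc u1) (fderiv ℝ (unc u1) q) q :=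
    ((hu1.differentiable (by simp)) q).hasFDerivAt
  have U2 : HasFDerivAt (unc u2) (fderiv ℝ (unc u2) q) q :=
    ((hu2.differentiable (by simp)) q).hasFDerivAt
  have U3 : HasFDerivAt (unc u3) (fderiv ℝ (unc u3) q) q :=
    ((hu3.differentiable (by simp)) q).hasFDerivAt
  have H := (((D Ee4).add (U1.mul (D E1))).add (U2.mul (D E2))).add (U3.mul (D E3))
  have h2 : fderiv ℝ (MFa u1 u2 u3 f) q = _ := H.fderiv
  rw [h2]
  simp only [ContinuousLinearMap.add_apply, ContinuousLinearMap.smul_apply, smul_eq_mul,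
    Pi.mul_apply, Pi.add_apply]
  ring

theorem convective_derivative_nambu_bracket
    (f g h u1 u2 u3 : ℝ → ℝ → ℝ → ℝ → ℝ)
    (hf : ContDiff ℝ (⊤ : ℕ∞) (fun p : ℝ × ℝ × ℝ × ℝ => f p.1 p.2.1 p.2.2.1 p.2.2.2))
    (hg : ContDiff ℝ (⊤ : ℕ∞) (fun p : ℝ × ℝ × ℝ × ℝ => g p.1 p.2.1 p.2.2.1 p.2.2.2))
    (hh : ContDiff ℝ (⊤ : ℕ∞) (fun p : ℝ × ℝ × ℝ × ℝ => h p.1 p.2.1 p.2.2.1 p.2.2.2))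
    (hu1 : ContDiff ℝ (⊤ : ℕ∞) (fun p : ℝ × ℝ × ℝ × ℝ => u1 p.1 p.2.1 p.2.2.1 p.2.2.2))
    (hu2 : ContDiff ℝ (⊤ : ℕ∞) (fun p : ℝ × ℝ × ℝ × ℝ => u2 p.1 p.2.1 p.2.2.1 p.2.2.2))
    (hu3 : ContDiff ℝ (⊤ : ℕ∞) (fun p : ℝ × ℝ × ℝ × ℝ => u3 p.1 p.2.1 p.2.2.1 p.2.2.2)) :
    ∀ x y z t : ℝ,
      Dt3 u1 u2 u3 (nb f g h) x y z t =
        nb (Dt3 u1 u2 u3 f) g h x y z t + nb f (Dt3 u1 u2 u3 g) h x y z t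
          + nb f g (Dt3 u1 u2 u3 h) x y z t
          - (p1 u1 x y z t + p2 u2 x y z t + p3 u3 x y z t) * nb f g h x y z t := by
  have hf' : ContDiff ℝ (⊤ : ℕ∞) (unc f) := hf
  have hg' : ContDiff ℝ (⊤ : ℕ∞) (unc g) := hg
  have hh' : ContDiff ℝ (⊤ : ℕ∞) (unc h) := hh
  have hu1' : ContDiff ℝ (⊤ : ℕ∞) (unc u1) := hu1
  have hu2' : ContDiff ℝ (⊤ : ℕ∞) (unc u2) := hu2
  have hu3' : ContDiff ℝ (⊤ : ℕ∞) (unc u3) := hu3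
  intro x y z t
  have hdf := hf'.differentiable (by simp)
  have hdg := hg'.differentiable (by simp)
  have hdh := hh'.differentiable (by simp)
  have hdu1 := hu1'.differentiable (by simp)
  have hdu2 := hu2'.differentiable (by simp)
  have hdu3 := hu3'.differentiable (by simp)
  have huncnb : unc (nb f g h) = NBa f g h := unc_nb hf' hg' hh'
  have hdnb : DifferentiableAt ℝ (unc (nb f g h)) (x,y,z,t) := by
    rw [huncnb]; exact ((NBa_contDiff hf' hg' hh').differentiable (by simp)) _
  have huF : unc (Dt3 u1 u2 u3 f) = MFa u1 u2 u3 f := unc_Dt3 hf'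
  have hdF : DifferentiableAt ℝ (unc (Dt3 u1 u2 u3 f)) (x,y,z,t) := by
    rw [huF]; exact ((MFa_contDiff hf' hu1' hu2' hu3').differentiable (by simp)) _
  have huG : unc (Dt3 u1 u2 u3 g) = MFa u1 u2 u3 g := unc_Dt3 hg'
  have hdG : DifferentiableAt ℝ (unc (Dt3 u1 u2 u3 g)) (x,y,z,t) := by
    rw [huG]; exact ((MFa_contDiff hg' hu1' hu2' hu3').differentiable (by simp)) _
  have huH : unc (Dt3 u1 u2 u3 h) = MFa u1 u2 u3 h := unc_Dt3 hh'
  have hdH : DifferentiableAt ℝ (unc (Dt3 u1 u2 u3 h)) (x,y,z,t) := by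
    rw [huH]; exact ((MFa_contDiff hh' hu1' hu2' hu3').differentiable (by simp)) _
  have m1 : Dt3 u1 u2 u3 (nb f g h) x y z t
      = p4 (nb f g h) x y z t + u1 x y z t * p1 (nb f g h) x y z t
        + u2 x y z t * p2 (nb f g h) x y z t + u3 x y z t * p3 (nb f g h) x y z t := rfl
  have m2 : nb (Dt3 u1 u2 u3 f) g h x y z t
      = p1 (Dt3 u1 u2 u3 f) x y z t * (p2 g x y z t * p3 h x y z t - p3 g x y z t * p2 h x y z t)
      - p2 (Dt3 u1 u2 u3 f) x y z t * (p1 g x y z t * p3 h x y z t - p3 g x y z t * p1 h x y z t)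
      + p3 (Dt3 u1 u2 u3 f) x y z t * (p1 g x y z t * p2 h x y z t - p2 g x y z t * p1 h x y z t) := rfl
  have m3 : nb f (Dt3 u1 u2 u3 g) h x y z t
      = p1 f x y z t * (p2 (Dt3 u1 u2 u3 g) x y z t * p3 h x y z t - p3 (Dt3 u1 u2 u3 g) x y z t * p2 h x y z t)
      - p2 f x y z t * (p1 (Dt3 u1 u2 u3 g) x y z t * p3 h x y z t - p3 (Dt3 u1 u2 u3 g) x y z t * p1 h x y z t)
      + p3 f x y z t * (p1 (Dt3 u1 u2 u3 g) x y z t * p2 h x y z t - p2 (Dt3 u1 u2 u3 g) x y z t * p1 h x y z t) := rfl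
  have m4 : nb f g (Dt3 u1 u2 u3 h) x y z t
      = p1 f x y z t * (p2 g x y z t * p3 (Dt3 u1 u2 u3 h) x y z t - p3 g x y z t * p2 (Dt3 u1 u2 u3 h) x y z t)
      - p2 f x y z t * (p1 g x y z t * p3 (Dt3 u1 u2 u3 h) x y z t - p3 g x y z t * p1 (Dt3 u1 u2 u3 h) x y z t)
      + p3 f x y z t * (p1 g x y z t * p2 (Dt3 u1 u2 u3 h) x y z t - p2 g x y z t * p1 (Dt3 u1 u2 u3 h) x y z t) := rfl
  have m0 : nb f g h x y z t
      = p1 f x y z t * (p2 g x y z t * p3 h x y z t - p3 g x y z t * p2 h x y z t)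
      - p2 f x y z t * (p1 g x y z t * p3 h x y z t - p3 g x y z t * p1 h x y z t)
      + p3 f x y z t * (p1 g x y z t * p2 h x y z t - p2 g x y z t * p1 h x y z t) := rfl
  rw [m1, m2, m3, m4, m0]
  rw [p1_eq _ hdnb, p2_eq _ hdnb, p3_eq _ hdnb, p4_eq _ hdnb, huncnb]
  rw [p1_eq _ hdF, p2_eq _ hdF, p3_eq _ hdF, huF]
  rw [p1_eq _ hdG, p2_eq _ hdG, p3_eq _ hdG, huG]
  rw [p1_eq _ hdH, p2_eq _ hdH, p3_eq _ hdH, huH]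
  rw [fderiv_NBa hf' hg' hh' (x,y,z,t) E1, fderiv_NBa hf' hg' hh' (x,y,z,t) E2,
      fderiv_NBa hf' hg' hh' (x,y,z,t) E3, fderiv_NBa hf' hg' hh' (x,y,z,t) Ee4]
  rw [fderiv_MFa hf' hu1' hu2' hu3' (x,y,z,t) E1, fderiv_MFa hf' hu1' hu2' hu3' (x,y,z,t) E2,
      fderiv_MFa hf' hu1' hu2' hu3' (x,y,z,t) E3]
  rw [fderiv_MFa hg' hu1' hu2' hu3' (x,y,z,t) E1, fderiv_MFa hg' hu1' hu2' hu3' (x,y,z,t) E2,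
      fderiv_MFa hg' hu1' hu2' hu3' (x,y,z,t) E3]
  rw [fderiv_MFa hh' hu1' hu2' hu3' (x,y,z,t) E1, fderiv_MFa hh' hu1' hu2' hu3' (x,y,z,t) E2,
      fderiv_MFa hh' hu1' hu2' hu3' (x,y,z,t) E3]
  rw [p1_eq f (hdf _), p2_eq f (hdf _), p3_eq f (hdf _)]
  rw [p1_eq g (hdg _), p2_eq g (hdg _), p3_eq g (hdg _)]
  rw [p1_eq h (hdh _), p2_eq h (hdh _), p3_eq h (hdh _)]
  rw [p1_eq u1 (hdu1 _), p2_eq u2 (hdu2 _), p3_eq u3 (hdu3 _)]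
  have hU1 : unc u1 (x,y,z,t) = u1 x y z t := rfl
  have hU2 : unc u2 (x,y,z,t) = u2 x y z t := rfl
  have hU3 : unc u3 (x,y,z,t) = u3 x y z t := rfl
  rw [hU1, hU2, hU3]
  simp only [DD]
  simp only [S_symm' f hf' E2 E1, S_symm' f hf' E3 E1, S_symm' f hf' Ee4 E1,
    S_symm' f hf' E3 E2, S_symm' f hf' Ee4 E2, S_symm' f hf' Ee4 E3,
    S_symm' g hg' E2 E1, S_symm' g hg' E3 E1, S_symm' g hg' Ee4 E1,
    S_symm' g hg' E3 E2, S_symm' g hg' Ee4 E2, S_symm' g hg' Ee4 E3,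
    S_symm' h hh' E2 E1, S_symm' h hh' E3 E1, S_symm' h hh' Ee4 E1,
    S_symm' h hh' E3 E2, S_symm' h hh' Ee4 E2, S_symm' h hh' Ee4 E3]
  ring
end
end

section
/- Let u(x,y,t) be a smooth velocity field on the plane, h(x,y,t) > 0 a smooth positive function satisfying the continuity equation D_t h + h (∇·u) = 0, and q(x,y,t) a smooth function satisfying D_t q = 0, where D_t = ∂_t + u·∇ is the convective derivative. Then the vector field L_q acting on functions by L_q f = (∂_y q ∂_x f − ∂_x q ∂_y f)/h (i.e., L_q f = {f,q}/h) commutes with D_t: [D_t, L_q] f = D_t(L_q f) − L_q(D_t f) = 0 for every smooth function f. -/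
noncomputable section

def px (f : ℝ → ℝ → ℝ → ℝ) : ℝ → ℝ → ℝ → ℝ := fun x y t => deriv (fun x' => f x' y t) x
def py (f : ℝ → ℝ → ℝ → ℝ) : ℝ → ℝ → ℝ → ℝ := fun x y t => deriv (fun y' => f x y' t) y
def pt (f : ℝ → ℝ → ℝ → ℝ) : ℝ → ℝ → ℝ → ℝ := fun x y t => deriv (fun t' => f x y t') t

/-- Convective derivative `D_t f = ∂_t f + u₁ ∂_x f + u₂ ∂_y f`. -/
def Dt (u1 u2 f : ℝ → ℝ → ℝ → ℝ) : ℝ → ℝ → ℝ → ℝ :=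
  fun x y t => pt f x y t + u1 x y t * px f x y t + u2 x y t * py f x y t

/-- Planar Poisson bracket. -/
def pb (f g : ℝ → ℝ → ℝ → ℝ) : ℝ → ℝ → ℝ → ℝ :=
  fun x y t => px f x y t * py g x y t - py f x y t * px g x y t

/-- The relabeling vector field `L_q f = {f, q} / h`. -/
def Lq (h q f : ℝ → ℝ → ℝ → ℝ) : ℝ → ℝ → ℝ → ℝ :=
  fun x y t => pb f q x y t / h x y t

namespace Relabel

def unc (f : ℝ → ℝ → ℝ → ℝ) : ℝ × ℝ × ℝ → ℝ := fun p => f p.1 p.2.1 p.2.2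

def e1 : ℝ × ℝ × ℝ := (1, 0, 0)
def e2 : ℝ × ℝ × ℝ := (0, 1, 0)
def e3 : ℝ × ℝ × ℝ := (0, 0, 1)

variable {f : ℝ → ℝ → ℝ → ℝ}

lemma hasDerivAt_sectx (hf : ContDiff ℝ (⊤ : ℕ∞) (unc f)) (x y t : ℝ) :
    HasDerivAt (fun x' => f x' y t) (fderiv ℝ (unc f) (x, y, t) e1) x := by
  have hline : HasDerivAt (fun x' : ℝ => ((x', y, t) : ℝ × ℝ × ℝ)) e1 x :=
    (hasDerivAt_id x).prodMk ((hasDerivAt_const x y).prodMk (hasDerivAt_const x t))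
  exact ((hf.differentiable (by simp) (x, y, t)).hasFDerivAt).comp_hasDerivAt x hline

lemma hasDerivAt_secty (hf : ContDiff ℝ (⊤ : ℕ∞) (unc f)) (x y t : ℝ) :
    HasDerivAt (fun y' => f x y' t) (fderiv ℝ (unc f) (x, y, t) e2) y := by
  have hline : HasDerivAt (fun y' : ℝ => ((x, y', t) : ℝ × ℝ × ℝ)) e2 y :=
    (hasDerivAt_const y x).prodMk ((hasDerivAt_id y).prodMk (hasDerivAt_const y t))
  exact ((hf.differentiable (by simp) (x, y, t)).hasFDerivAt).comp_hasDerivAt y hline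

lemma hasDerivAt_sectt (hf : ContDiff ℝ (⊤ : ℕ∞) (unc f)) (x y t : ℝ) :
    HasDerivAt (fun t' => f x y t') (fderiv ℝ (unc f) (x, y, t) e3) t := by
  have hline : HasDerivAt (fun t' : ℝ => ((x, y, t') : ℝ × ℝ × ℝ)) e3 t :=
    (hasDerivAt_const t x).prodMk ((hasDerivAt_const t y).prodMk (hasDerivAt_id t))
  exact ((hf.differentiable (by simp) (x, y, t)).hasFDerivAt).comp_hasDerivAt t hline

lemma px_eq (hf : ContDiff ℝ (⊤ : ℕ∞) (unc f)) (x y t : ℝ) :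
    px f x y t = fderiv ℝ (unc f) (x, y, t) e1 := (hasDerivAt_sectx hf x y t).deriv

lemma py_eq (hf : ContDiff ℝ (⊤ : ℕ∞) (unc f)) (x y t : ℝ) :
    py f x y t = fderiv ℝ (unc f) (x, y, t) e2 := (hasDerivAt_secty hf x y t).deriv

lemma pt_eq (hf : ContDiff ℝ (⊤ : ℕ∞) (unc f)) (x y t : ℝ) :
    pt f x y t = fderiv ℝ (unc f) (x, y, t) e3 := (hasDerivAt_sectt hf x y t).deriv

lemma hasDerivAt_px (hf : ContDiff ℝ (⊤ : ℕ∞) (unc f)) (x y t : ℝ) :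
    HasDerivAt (fun x' => f x' y t) (px f x y t) x := by
  rw [px_eq hf]; exact hasDerivAt_sectx hf x y t

lemma hasDerivAt_py (hf : ContDiff ℝ (⊤ : ℕ∞) (unc f)) (x y t : ℝ) :
    HasDerivAt (fun y' => f x y' t) (py f x y t) y := by
  rw [py_eq hf]; exact hasDerivAt_secty hf x y t

lemma hasDerivAt_pt (hf : ContDiff ℝ (⊤ : ℕ∞) (unc f)) (x y t : ℝ) :
    HasDerivAt (fun t' => f x y t') (pt f x y t) t := by
  rw [pt_eq hf]; exact hasDerivAt_sectt hf x y t

lemma contDiff_pv (hf : ContDiff ℝ (⊤ : ℕ∞) (unc f)) (v : ℝ × ℝ × ℝ) :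
    ContDiff ℝ (⊤ : ℕ∞) (fun p => fderiv ℝ (unc f) p v) :=
  (hf.fderiv_right (by simp)).clm_apply contDiff_const

lemma unc_px (hf : ContDiff ℝ (⊤ : ℕ∞) (unc f)) :
    unc (px f) = fun p => fderiv ℝ (unc f) p e1 := by
  funext p; exact px_eq hf p.1 p.2.1 p.2.2

lemma unc_py (hf : ContDiff ℝ (⊤ : ℕ∞) (unc f)) :
    unc (py f) = fun p => fderiv ℝ (unc f) p e2 := by
  funext p; exact py_eq hf p.1 p.2.1 p.2.2

lemma unc_pt (hf : ContDiff ℝ (⊤ : ℕ∞) (unc f)) :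
    unc (pt f) = fun p => fderiv ℝ (unc f) p e3 := by
  funext p; exact pt_eq hf p.1 p.2.1 p.2.2

lemma contDiff_px (hf : ContDiff ℝ (⊤ : ℕ∞) (unc f)) : ContDiff ℝ (⊤ : ℕ∞) (unc (px f)) := by
  rw [unc_px hf]; exact contDiff_pv hf e1

lemma contDiff_py (hf : ContDiff ℝ (⊤ : ℕ∞) (unc f)) : ContDiff ℝ (⊤ : ℕ∞) (unc (py f)) := by
  rw [unc_py hf]; exact contDiff_pv hf e2

lemma contDiff_pt (hf : ContDiff ℝ (⊤ : ℕ∞) (unc f)) : ContDiff ℝ (⊤ : ℕ∞) (unc (pt f)) := by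
  rw [unc_pt hf]; exact contDiff_pv hf e3

lemma fderiv_pv_comm (hf : ContDiff ℝ (⊤ : ℕ∞) (unc f)) (p v w : ℝ × ℝ × ℝ) :
    fderiv ℝ (fun p => fderiv ℝ (unc f) p v) p w
      = fderiv ℝ (fun p => fderiv ℝ (unc f) p w) p v := by
  have hsymm : IsSymmSndFDerivAt ℝ (unc f) p :=
    hf.contDiffAt.isSymmSndFDerivAt (by rw [minSmoothness_of_isRCLikeNormedField]; exact WithTop.coe_le_coe.mpr le_top)
  have hd : DifferentiableAt ℝ (fderiv ℝ (unc f)) p :=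
    ((hf.fderiv_right (n := (⊤ : ℕ∞)) (m := (⊤ : ℕ∞)) (by simp)).differentiable (by simp)) p
  have h1 : ∀ u : ℝ × ℝ × ℝ, fderiv ℝ (fun q => fderiv ℝ (unc f) q u) p
      = (fderiv ℝ (fderiv ℝ (unc f)) p).flip u := by
    intro u
    rw [fderiv_clm_apply hd (differentiableAt_const u)]
    simp
  rw [h1 v, h1 w]
  simpa using hsymm w v

lemma py_px_comm (hf : ContDiff ℝ (⊤ : ℕ∞) (unc f)) (x y t : ℝ) :
    py (px f) x y t = px (py f) x y t := by
  rw [py_eq (contDiff_px hf), px_eq (contDiff_py hf), unc_px hf, unc_py hf,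
    fderiv_pv_comm hf]

lemma pt_px_comm (hf : ContDiff ℝ (⊤ : ℕ∞) (unc f)) (x y t : ℝ) :
    pt (px f) x y t = px (pt f) x y t := by
  rw [pt_eq (contDiff_px hf), px_eq (contDiff_pt hf), unc_px hf, unc_pt hf,
    fderiv_pv_comm hf]

lemma pt_py_comm (hf : ContDiff ℝ (⊤ : ℕ∞) (unc f)) (x y t : ℝ) :
    pt (py f) x y t = py (pt f) x y t := by
  rw [pt_eq (contDiff_py hf), py_eq (contDiff_pt hf), unc_py hf, unc_pt hf,
    fderiv_pv_comm hf]

end Relabel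

open Relabel

theorem relabeling_field_commutes_with_convective_derivative
    (u1 u2 h q : ℝ → ℝ → ℝ → ℝ)
    (hu1 : ContDiff ℝ (⊤ : ℕ∞) (fun p : ℝ × ℝ × ℝ => u1 p.1 p.2.1 p.2.2))
    (hu2 : ContDiff ℝ (⊤ : ℕ∞) (fun p : ℝ × ℝ × ℝ => u2 p.1 p.2.1 p.2.2))
    (hh : ContDiff ℝ (⊤ : ℕ∞) (fun p : ℝ × ℝ × ℝ => h p.1 p.2.1 p.2.2))
    (hq : ContDiff ℝ (⊤ : ℕ∞) (fun p : ℝ × ℝ × ℝ => q p.1 p.2.1 p.2.2))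
    (hpos : ∀ x y t : ℝ, 0 < h x y t)
    (hcont : ∀ x y t : ℝ,
      Dt u1 u2 h x y t + h x y t * (px u1 x y t + py u2 x y t) = 0)
    (hqcons : ∀ x y t : ℝ, Dt u1 u2 q x y t = 0) :
    ∀ f : ℝ → ℝ → ℝ → ℝ, ContDiff ℝ (⊤ : ℕ∞) (fun p : ℝ × ℝ × ℝ => f p.1 p.2.1 p.2.2) →
      ∀ x y t : ℝ,
        Dt u1 u2 (Lq h q f) x y t - Lq h q (Dt u1 u2 f) x y t = 0 := by
  intro f hf x y t
  have hu1' : ContDiff ℝ (⊤ : ℕ∞) (unc u1) := hu1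
  have hu2' : ContDiff ℝ (⊤ : ℕ∞) (unc u2) := hu2
  have hh' : ContDiff ℝ (⊤ : ℕ∞) (unc h) := hh
  have hq' : ContDiff ℝ (⊤ : ℕ∞) (unc q) := hq
  have hf' : ContDiff ℝ (⊤ : ℕ∞) (unc f) := hf
  have hne : h x y t ≠ 0 := (hpos x y t).ne'
  -- derivative of L_q f in the three directions
  have HLx := ((((hasDerivAt_px (contDiff_px hf') x y t).mul
      (hasDerivAt_px (contDiff_py hq') x y t)).sub
      ((hasDerivAt_px (contDiff_py hf') x y t).mul
      (hasDerivAt_px (contDiff_px hq') x y t))).div (hasDerivAt_px hh' x y t) hne)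
  have eLx : px (Lq h q f) x y t =
      ((px (px f) x y t * py q x y t + px f x y t * px (py q) x y t -
        (px (py f) x y t * px q x y t + py f x y t * px (px q) x y t)) * h x y t -
        (px f x y t * py q x y t - py f x y t * px q x y t) * px h x y t) / h x y t ^ 2 :=
    HLx.deriv
  have HLy := ((((hasDerivAt_py (contDiff_px hf') x y t).mul
      (hasDerivAt_py (contDiff_py hq') x y t)).sub
      ((hasDerivAt_py (contDiff_py hf') x y t).mul
      (hasDerivAt_py (contDiff_px hq') x y t))).div (hasDerivAt_py hh' x y t) hne)
  have eLy : py (Lq h q f) x y t =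
      ((py (px f) x y t * py q x y t + px f x y t * py (py q) x y t -
        (py (py f) x y t * px q x y t + py f x y t * py (px q) x y t)) * h x y t -
        (px f x y t * py q x y t - py f x y t * px q x y t) * py h x y t) / h x y t ^ 2 :=
    HLy.deriv
  have HLt := ((((hasDerivAt_pt (contDiff_px hf') x y t).mul
      (hasDerivAt_pt (contDiff_py hq') x y t)).sub
      ((hasDerivAt_pt (contDiff_py hf') x y t).mul
      (hasDerivAt_pt (contDiff_px hq') x y t))).div (hasDerivAt_pt hh' x y t) hne)
  have eLt : pt (Lq h q f) x y t =
      ((pt (px f) x y t * py q x y t + px f x y t * pt (py q) x y t -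
        (pt (py f) x y t * px q x y t + py f x y t * pt (px q) x y t)) * h x y t -
        (px f x y t * py q x y t - py f x y t * px q x y t) * pt h x y t) / h x y t ^ 2 :=
    HLt.deriv
  -- derivatives of D_t f in x and y
  have HDx := (((hasDerivAt_px (contDiff_pt hf') x y t).add
      ((hasDerivAt_px hu1' x y t).mul (hasDerivAt_px (contDiff_px hf') x y t))).add
      ((hasDerivAt_px hu2' x y t).mul (hasDerivAt_px (contDiff_py hf') x y t)))
  have eDfx : px (Dt u1 u2 f) x y t =
      px (pt f) x y t +
        (px u1 x y t * px f x y t + u1 x y t * px (px f) x y t) +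
        (px u2 x y t * py f x y t + u2 x y t * px (py f) x y t) := HDx.deriv
  have HDy := (((hasDerivAt_py (contDiff_pt hf') x y t).add
      ((hasDerivAt_py hu1' x y t).mul (hasDerivAt_py (contDiff_px hf') x y t))).add
      ((hasDerivAt_py hu2' x y t).mul (hasDerivAt_py (contDiff_py hf') x y t)))
  have eDfy : py (Dt u1 u2 f) x y t =
      py (pt f) x y t +
        (py u1 x y t * px f x y t + u1 x y t * py (px f) x y t) +
        (py u2 x y t * py f x y t + u2 x y t * py (py f) x y t) := HDy.deriv
  -- differentiated constraints for q
  have HQx := (((hasDerivAt_px (contDiff_pt hq') x y t).add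
      ((hasDerivAt_px hu1' x y t).mul (hasDerivAt_px (contDiff_px hq') x y t))).add
      ((hasDerivAt_px hu2' x y t).mul (hasDerivAt_px (contDiff_py hq') x y t)))
  have eQx : px (Dt u1 u2 q) x y t =
      px (pt q) x y t +
        (px u1 x y t * px q x y t + u1 x y t * px (px q) x y t) +
        (px u2 x y t * py q x y t + u2 x y t * px (py q) x y t) := HQx.deriv
  have zx : (fun x' => Dt u1 u2 q x' y t) = (fun _ : ℝ => (0 : ℝ)) :=
    funext fun x' => hqcons x' y t
  have qcx : px (pt q) x y t =
      -(px u1 x y t * px q x y t + u1 x y t * px (px q) x y t +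
        (px u2 x y t * py q x y t + u2 x y t * px (py q) x y t)) := by
    have e0 : px (Dt u1 u2 q) x y t = 0 := by
      show deriv (fun x' => Dt u1 u2 q x' y t) x = 0
      rw [zx]; simp
    rw [e0] at eQx; linarith
  have HQy := (((hasDerivAt_py (contDiff_pt hq') x y t).add
      ((hasDerivAt_py hu1' x y t).mul (hasDerivAt_py (contDiff_px hq') x y t))).add
      ((hasDerivAt_py hu2' x y t).mul (hasDerivAt_py (contDiff_py hq') x y t)))
  have eQy : py (Dt u1 u2 q) x y t =
      py (pt q) x y t +
        (py u1 x y t * px q x y t + u1 x y t * py (px q) x y t) +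
        (py u2 x y t * py q x y t + u2 x y t * py (py q) x y t) := HQy.deriv
  have zy : (fun y' => Dt u1 u2 q x y' t) = (fun _ : ℝ => (0 : ℝ)) :=
    funext fun y' => hqcons x y' t
  have qcy : py (pt q) x y t =
      -(py u1 x y t * px q x y t + u1 x y t * py (px q) x y t +
        (py u2 x y t * py q x y t + u2 x y t * py (py q) x y t)) := by
    have e0 : py (Dt u1 u2 q) x y t = 0 := by
      show deriv (fun y' => Dt u1 u2 q x y' t) y = 0
      rw [zy]; simp
    rw [e0] at eQy; linarith
  -- continuity equation
  have e3 : pt h x y t =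
      -(u1 x y t * px h x y t + u2 x y t * py h x y t +
        h x y t * (px u1 x y t + py u2 x y t)) := by
    have := hcont x y t
    simp only [Dt] at this
    linarith
  -- assemble
  show pt (Lq h q f) x y t + u1 x y t * px (Lq h q f) x y t +
      u2 x y t * py (Lq h q f) x y t -
      (px (Dt u1 u2 f) x y t * py q x y t - py (Dt u1 u2 f) x y t * px q x y t) /
        h x y t = 0
  rw [eLt, eLx, eLy, eDfx, eDfy,
    pt_px_comm hf' x y t, pt_py_comm hf' x y t, py_px_comm hf' x y t,
    pt_px_comm hq' x y t, pt_py_comm hq' x y t, py_px_comm hq' x y t,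
    qcx, qcy, e3, py_px_comm hq' x y t]
  field_simp
  ring
end
end
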